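/- arXiv:2210.11510 — 3 statements merged into one kernel-verified Lean document; each statement's English description precedes it below -/
import Mathlib

section
/- Let A ∈ ℝ^{3×3} be symmetric positive definite. Then tr((I₃ − R)A) ≥ 0 for every R ∈ SO(3), with equality if and only if R = I₃. -/
open Matrix Real

noncomputable def skew (x : Fin 3 → ℝ) : Matrix (Fin 3) (Fin 3) ℝ :=
  !![0, -x 2, x 1; x 2, 0, -x 0; -x 1, x 0, 0]

noncomputable def psi (A : Matrix (Fin 3) (Fin 3) ℝ) : Fin 3 → ℝ :=
  ![(A 2 1 - A 1 2)/2, (A 0 2 - A 2 0)/2, (A 1 0 - A 0 1)/2]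

/-!
For orthogonal `R` and symmetric `A`, expanding `(1 - R) A (1 - R)ᵀ` and using `RᵀR = 1` gives
`tr((1 - R) A (1 - R)ᵀ) = 2 tr((1 - R) A)`. The left side is the trace of a congruence of the
positive definite `A`, hence nonnegative, and it vanishes only when `1 - R = 0`.
-/

open scoped ComplexOrder

namespace Matrix

variable {m n R : Type*} [Fintype n]

lemma mul_mul_conjTranspose_apply_self [Ring R] [StarRing R] (M : Matrix m n R) (A : Matrix n n R)
    (i : m) : (M * A * Mᴴ) i i = M i ⬝ᵥ (A *ᵥ star (M i)) := by
  rw [Matrix.mul_assoc]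
  simp only [mul_apply, dotProduct, mulVec]
  rfl

lemma PosDef.mul_mul_conjTranspose_same_eq_zero_iff [Ring R] [PartialOrder R] [StarRing R]
    {A : Matrix n n R} (hA : A.PosDef) (M : Matrix m n R) : M * A * Mᴴ = 0 ↔ M = 0 := by
  refine ⟨fun h ↦ funext fun i ↦ ?_, fun h ↦ by simp [h]⟩
  by_contra hi
  have hpos := hA.dotProduct_mulVec_pos (x := star (M i)) (star_ne_zero.mpr hi)
  rw [star_star, ← mul_mul_conjTranspose_apply_self, h] at hpos
  exact hpos.false

lemma PosDef.trace_mul_mul_conjTranspose_eq_zero_iff {𝕜 : Type*} [RCLike 𝕜]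
    [Fintype m] {A : Matrix n n 𝕜} (hA : A.PosDef) (M : Matrix m n 𝕜) :
    (M * A * Mᴴ).trace = 0 ↔ M = 0 := by
  rw [(hA.posSemidef.mul_mul_conjTranspose_same M).trace_eq_zero_iff,
    hA.mul_mul_conjTranspose_same_eq_zero_iff]

lemma trace_one_sub_mul_mul_one_sub_transpose [CommRing R] [DecidableEq n] {A U : Matrix n n R}
    (hA : A.IsSymm) (hU : Uᵀ * U = 1) :
    ((1 - U) * A * (1 - U)ᵀ).trace = 2 * ((1 - U) * A).trace := by
  have hcyc : (U * A * Uᵀ).trace = A.trace := by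
    rw [trace_mul_cycle, hU, Matrix.one_mul]
  have htr : (A * Uᵀ).trace = (U * A).trace := by
    rw [← trace_transpose, transpose_mul, transpose_transpose, hA.eq]
  simp only [transpose_sub, transpose_one, Matrix.sub_mul, Matrix.mul_sub, Matrix.one_mul,
    Matrix.mul_one, trace_sub, hcyc, htr]
  ring

end Matrix

theorem stmt6_general (A : Matrix (Fin 3) (Fin 3) ℝ) (hsymm : A.IsSymm) (hpd : A.PosDef)
    (R : Matrix (Fin 3) (Fin 3) ℝ) (hR : Rᵀ * R = 1) :
    0 ≤ ((1 - R) * A).trace ∧ (((1 - R) * A).trace = 0 ↔ R = 1) := by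
  have hquad : 2 * ((1 - R) * A).trace = ((1 - R) * A * (1 - R)ᴴ).trace := by
    rw [conjTranspose_eq_transpose_of_trivial, trace_one_sub_mul_mul_one_sub_transpose hsymm hR]
  constructor
  · have := (hpd.posSemidef.mul_mul_conjTranspose_same (1 - R)).trace_nonneg
    linarith
  · rw [← mul_eq_zero_iff_left two_ne_zero, hquad, hpd.trace_mul_mul_conjTranspose_eq_zero_iff,
      sub_eq_zero, eq_comm]

theorem stmt6 (A : Matrix (Fin 3) (Fin 3) ℝ) (hsymm : A.IsSymm) (hpd : A.PosDef)
    (R : Matrix (Fin 3) (Fin 3) ℝ) (hR : Rᵀ * R = 1) (hdet : R.det = 1) :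
    0 ≤ ((1 - R) * A).trace ∧ (((1 - R) * A).trace = 0 ↔ R = 1) :=
  stmt6_general A hsymm hpd R hR
end

section
/- Let A ∈ ℝ^{3×3} be symmetric positive definite with three distinct eigenvalues, and let R ∈ SO(3) satisfy ψ(AR) = 0 (i.e., AR is symmetric). Then either R = I₃ or R = R_a(π, v) for some unit eigenvector v of A. In particular, the set {R ∈ SO(3) : ψ(AR) = 0} consists of exactly four rotations: I₃ and the three rotations by angle π about the eigenvector directions of A. -/
open Matrix Real

noncomputable def Ra (θ : ℝ) (u : Fin 3 → ℝ) : Matrix (Fin 3) (Fin 3) ℝ :=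
  1 + Real.sin θ • skew u + (1 - Real.cos θ) • (skew u * skew u)

/-!
Diagonalise `A = Uᵀ D U` with `U` orthogonal and `D = diag(λ₀, λ₁, λ₂)`. Conjugating by `U`
preserves orthogonality, the determinant and the symmetry of `A R`, so it suffices to treat
`A = D`. If `S` is orthogonal and `M = D S` is symmetric, then `M M = M Mᵀ = D²`, so `M` commutes
with `D²`, whose diagonal entries are distinct because the `λᵢ` are positive and distinct; hence
`M`, and with it `S`, is diagonal. A diagonal rotation of `ℝ³` is `I` or one of the three
half-turns `diag(±1)` with exactly one `+1`, and the half-turn about the `k`-th axis conjugates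
back to `R_a(π, vₖ) = 2 vₖ vₖᵀ - I`.
-/

lemma psi_eq_zero_iff (M : Matrix (Fin 3) (Fin 3) ℝ) : psi M = 0 ↔ Mᵀ = M := by
  constructor
  · intro h
    have h21 : M 2 1 = M 1 2 := by simpa [psi, sub_eq_zero] using congrFun h 0
    have h02 : M 0 2 = M 2 0 := by simpa [psi, sub_eq_zero] using congrFun h 1
    have h10 : M 1 0 = M 0 1 := by simpa [psi, sub_eq_zero] using congrFun h 2
    ext i j
    fin_cases i <;> fin_cases j <;> simp [h21, h02, h10]
  · intro h
    funext i
    fin_cases i <;> simp [psi, ← congrFun₂ h 0 1, ← congrFun₂ h 0 2, ← congrFun₂ h 1 2]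

lemma skew_mul_skew (w : Fin 3 → ℝ) : skew w * skew w = vecMulVec w w - (w ⬝ᵥ w) • 1 := by
  ext a b
  fin_cases a <;> fin_cases b <;>
    simp [skew, mul_apply, Fin.sum_univ_three, vecMulVec_apply, dotProduct, one_apply] <;> ring

lemma Ra_pi (w : Fin 3 → ℝ) (hw : w ⬝ᵥ w = 1) : Ra π w = 2 • vecMulVec w w - 1 := by
  rw [Ra, skew_mul_skew, hw, sin_pi, cos_pi]
  module

lemma Matrix.IsDiag.of_commute_diagonal {n R : Type*} [Fintype n] [DecidableEq n] [CommRing R]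
    [NoZeroDivisors R] {μ : n → R} (hμ : Function.Injective μ) {M : Matrix n n R}
    (h : Commute M (diagonal μ)) : M.IsDiag := by
  intro i j hij
  have hMij := congrFun₂ h.eq i j
  rw [mul_diagonal, diagonal_mul] at hMij
  have hprod : M i j * (μ j - μ i) = 0 := by linear_combination hMij
  exact (mul_eq_zero.mp hprod).resolve_right (sub_ne_zero.mpr (hμ.ne hij).symm)

lemma isDiag_of_orthogonal_of_isSymm_diagonal_mul {n R : Type*} [Fintype n] [DecidableEq n]
    [Field R] [LinearOrder R] [IsStrictOrderedRing R] {d : n → R} (hd : ∀ i, 0 < d i)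
    (hinj : Function.Injective d) {S : Matrix n n R} (hS : Sᵀ * S = 1)
    (hsymm : (diagonal d * S)ᵀ = diagonal d * S) : S.IsDiag := by
  set M := diagonal d * S
  have hMM : M * M = diagonal (d * d) := by
    calc M * M = M * Mᵀ := by rw [hsymm]
      _ = diagonal d * (S * Sᵀ) * diagonal d := by simp [M, Matrix.mul_assoc]
      _ = diagonal (d * d) := by
        rw [mul_eq_one_comm.mp hS, Matrix.mul_one, diagonal_mul_diagonal]; rfl
  have hsq_inj : Function.Injective (d * d) := fun i j hij =>
    hinj ((mul_self_inj (hd i).le (hd j).le).mp hij)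
  have hM : M.IsDiag :=
    .of_commute_diagonal hsq_inj (hMM ▸ (Commute.refl M).mul_right (Commute.refl M))
  intro i j hij
  have hMij := hM hij
  simp only [M, diagonal_mul] at hMij
  exact (mul_eq_zero.mp hMij).resolve_left (hd i).ne'

def SymmetrizingRotations {n : Type*} [Fintype n] [DecidableEq n] (A : Matrix n n ℝ) :
    Set (Matrix n n ℝ) :=
  {R | Rᵀ * R = 1 ∧ R.det = 1 ∧ (A * R)ᵀ = A * R}

section Conjugation
variable {n : Type*} [Fintype n] {U : Matrix n n ℝ}

lemma transpose_conj (X : Matrix n n ℝ) : (Uᵀ * X * U)ᵀ = Uᵀ * Xᵀ * U := by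
  simp [Matrix.mul_assoc]

variable [DecidableEq n]

lemma conj_mul_conj (hU : U * Uᵀ = 1) (X Y : Matrix n n ℝ) :
    (Uᵀ * X * U) * (Uᵀ * Y * U) = Uᵀ * (X * Y) * U := by
  simp only [Matrix.mul_assoc]
  rw [← Matrix.mul_assoc U Uᵀ, hU, Matrix.one_mul]

lemma conj_inj (hU : U * Uᵀ = 1) {X Y : Matrix n n ℝ} :
    Uᵀ * X * U = Uᵀ * Y * U ↔ X = Y := by
  refine ⟨fun h => ?_, fun h => h ▸ rfl⟩
  have hinv : ∀ Z : Matrix n n ℝ, U * (Uᵀ * Z * U) * Uᵀ = Z := fun Z => by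
    simp only [Matrix.mul_assoc]
    rw [hU, Matrix.mul_one, ← Matrix.mul_assoc, hU, Matrix.one_mul]
  rw [← hinv X, h, hinv]

lemma conj_one (hU : U * Uᵀ = 1) : Uᵀ * 1 * U = 1 := by
  rw [Matrix.mul_one, mul_eq_one_comm.mp hU]

lemma exists_eq_conj (hU : U * Uᵀ = 1) (R : Matrix n n ℝ) : ∃ S, R = Uᵀ * S * U :=
  ⟨U * R * Uᵀ, by
    simp only [Matrix.mul_assoc]
    rw [mul_eq_one_comm.mp hU, Matrix.mul_one, ← Matrix.mul_assoc, mul_eq_one_comm.mp hU,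
      Matrix.one_mul]⟩

lemma det_conj (hU : U * Uᵀ = 1) (X : Matrix n n ℝ) : (Uᵀ * X * U).det = X.det := by
  have hdet : U.det * Uᵀ.det = 1 := by rw [← det_mul, hU, det_one]
  rw [det_mul, det_mul]
  linear_combination X.det * hdet

lemma conj_mem_symmetrizingRotations_iff (hU : U * Uᵀ = 1) {D S : Matrix n n ℝ} :
    Uᵀ * S * U ∈ SymmetrizingRotations (Uᵀ * D * U) ↔ S ∈ SymmetrizingRotations D := by
  simp only [SymmetrizingRotations, Set.mem_ofPred_eq]
  rw [conj_mul_conj hU, transpose_conj, transpose_conj, conj_mul_conj hU, det_conj hU]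
  conv_lhs => rw [← conj_one hU]
  rw [conj_inj hU, conj_inj hU]

end Conjugation

def halfTurn (k : Fin 3) : Matrix (Fin 3) (Fin 3) ℝ := diagonal fun i => if i = k then 1 else -1

lemma halfTurn_transpose_mul_self (k : Fin 3) : (halfTurn k)ᵀ * halfTurn k = 1 := by
  rw [halfTurn, diagonal_transpose, diagonal_mul_diagonal, ← diagonal_one]
  congr 1; funext i; split_ifs <;> norm_num

lemma det_halfTurn (k : Fin 3) : (halfTurn k).det = 1 := by
  fin_cases k <;> simp [halfTurn, Fin.prod_univ_three]

lemma eq_one_or_halfTurn_of_isDiag {S : Matrix (Fin 3) (Fin 3) ℝ} (hdiag : S.IsDiag)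
    (hS : Sᵀ * S = 1) (hdet : S.det = 1) : S = 1 ∨ ∃ k, S = halfTurn k := by
  obtain ⟨s, rfl⟩ : ∃ s, S = diagonal s := ⟨S.diag, hdiag.diagonal_diag.symm⟩
  have hs : ∀ i, s i = 1 ∨ s i = -1 := fun i => by
    have hii := congrFun₂ hS i i
    simp only [diagonal_transpose, diagonal_mul_diagonal, diagonal_apply_eq, one_apply_eq] at hii
    exact mul_self_eq_one_iff.mp hii
  rw [det_diagonal, Fin.prod_univ_three] at hdet
  have hsigns : s = 1 ∨ ∃ k, s = fun i => if i = k then 1 else -1 := by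
    rcases hs 0 with h0 | h0 <;> rcases hs 1 with h1 | h1 <;> rcases hs 2 with h2 | h2 <;>
      rw [h0, h1, h2] at hdet <;> norm_num at hdet
    · left; funext i; fin_cases i <;> simp [h0, h1, h2]
    · right; use 0; funext i; fin_cases i <;> simp [h0, h1, h2]
    · right; use 1; funext i; fin_cases i <;> simp [h0, h1, h2]
    · right; use 2; funext i; fin_cases i <;> simp [h0, h1, h2]
  rcases hsigns with rfl | ⟨k, rfl⟩
  · exact .inl diagonal_one
  · exact .inr ⟨k, rfl⟩

lemma mem_symmetrizingRotations_diagonal_iff {lam : Fin 3 → ℝ} (hpos : ∀ i, 0 < lam i)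
    (hinj : Function.Injective lam) {S : Matrix (Fin 3) (Fin 3) ℝ} :
    S ∈ SymmetrizingRotations (diagonal lam) ↔ S = 1 ∨ ∃ k, S = halfTurn k := by
  constructor
  · rintro ⟨hS, hdet, hsymm⟩
    exact eq_one_or_halfTurn_of_isDiag
      (isDiag_of_orthogonal_of_isSymm_diagonal_mul hpos hinj hS hsymm) hS hdet
  · rintro (rfl | ⟨k, rfl⟩)
    · simp [SymmetrizingRotations]
    · refine ⟨halfTurn_transpose_mul_self k, det_halfTurn k, ?_⟩
      rw [halfTurn, diagonal_mul_diagonal, diagonal_transpose]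

section Eigenbasis
variable {n : Type*} [Fintype n] [DecidableEq n] {A : Matrix n n ℝ} {lam : n → ℝ} {v : n → n → ℝ}

lemma mul_transpose_eq_one_of_orthonormal (horth : ∀ i j, v i ⬝ᵥ v j = if i = j then 1 else 0) :
    of v * (of v)ᵀ = 1 := by
  ext i j
  simpa [mul_apply, dotProduct, one_apply] using horth i j

lemma eq_conj_diagonal_of_eigenvectors (horth : ∀ i j, v i ⬝ᵥ v j = if i = j then 1 else 0)
    (heig : ∀ i, A *ᵥ v i = lam i • v i) :
    A = (of v)ᵀ * diagonal lam * of v := by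
  have hAV : A * (of v)ᵀ = (of v)ᵀ * diagonal lam := by
    ext a j
    rw [mul_diagonal]
    simpa [mul_apply, mulVec, dotProduct, mul_comm] using congrFun (heig j) a
  rw [← hAV, Matrix.mul_assoc, mul_eq_one_comm.mp (mul_transpose_eq_one_of_orthonormal horth),
    Matrix.mul_one]

lemma eigenvalue_pos_of_posDef (horth : ∀ i j, v i ⬝ᵥ v j = if i = j then 1 else 0)
    (hpd : A.PosDef) (heig : ∀ i, A *ᵥ v i = lam i • v i) (i : n) :
    0 < lam i := by
  have hvi : v i ≠ 0 := fun h => by simpa [h] using horth i i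
  simpa [heig i, dotProduct_smul, horth i i] using hpd.dotProduct_mulVec_pos hvi

end Eigenbasis

lemma Ra_pi_eq_conj_halfTurn {v : Fin 3 → Fin 3 → ℝ}
    (horth : ∀ i j, v i ⬝ᵥ v j = if i = j then 1 else 0) (k : Fin 3) :
    Ra π (v k) = (of v)ᵀ * halfTurn k * of v := by
  have hone : (of v)ᵀ * of v = 1 := mul_eq_one_comm.mp (mul_transpose_eq_one_of_orthonormal horth)
  rw [Ra_pi (v k) (by simpa using horth k k)]
  ext a b
  rw [Matrix.sub_apply, ← hone]
  fin_cases k <;>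
    simp [halfTurn, mul_apply, Fin.sum_univ_three, vecMulVec_apply] <;> ring

lemma mem_symmetrizingRotations_iff {A : Matrix (Fin 3) (Fin 3) ℝ} {lam : Fin 3 → ℝ}
    {v : Fin 3 → Fin 3 → ℝ} (horth : ∀ i j, v i ⬝ᵥ v j = if i = j then 1 else 0)
    (hpd : A.PosDef) (heig : ∀ i, A *ᵥ v i = lam i • v i)
    (hinj : Function.Injective lam) (R : Matrix (Fin 3) (Fin 3) ℝ) :
    R ∈ SymmetrizingRotations A ↔ R = 1 ∨ ∃ k, R = Ra π (v k) := by
  have hU := mul_transpose_eq_one_of_orthonormal horth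
  obtain ⟨S, rfl⟩ := exists_eq_conj hU R
  have hpos := eigenvalue_pos_of_posDef horth hpd heig
  rw [eq_conj_diagonal_of_eigenvectors horth heig, conj_mem_symmetrizingRotations_iff hU,
    mem_symmetrizingRotations_diagonal_iff hpos hinj]
  conv_rhs => rw [← conj_one hU]
  rw [conj_inj hU]
  simp_rw [Ra_pi_eq_conj_halfTurn horth, conj_inj hU]

theorem stmt12_general (A : Matrix (Fin 3) (Fin 3) ℝ) (hpd : A.PosDef)
    (lam : Fin 3 → ℝ) (v : Fin 3 → Fin 3 → ℝ)
    (hlam : lam 0 < lam 1 ∧ lam 1 < lam 2)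
    (horth : ∀ i j, v i ⬝ᵥ v j = if i = j then 1 else 0)
    (heig : ∀ i, A *ᵥ v i = lam i • v i) :
    (∀ R : Matrix (Fin 3) (Fin 3) ℝ, Rᵀ * R = 1 → R.det = 1 → psi (A * R) = 0 →
      R = 1 ∨ ∃ w : Fin 3 → ℝ, w ⬝ᵥ w = 1 ∧ (∃ μ : ℝ, A *ᵥ w = μ • w) ∧ R = Ra Real.pi w) ∧
    {R : Matrix (Fin 3) (Fin 3) ℝ | Rᵀ * R = 1 ∧ R.det = 1 ∧ psi (A * R) = 0}
      = {1, Ra Real.pi (v 0), Ra Real.pi (v 1), Ra Real.pi (v 2)} := by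
  have hinj : Function.Injective lam :=
    (Fin.strictMono_iff_lt_succ.mpr (by simpa [Fin.forall_fin_two] using hlam)).injective
  have hmem := mem_symmetrizingRotations_iff horth hpd heig hinj
  simp_rw [psi_eq_zero_iff]
  refine ⟨fun R hR hdet hsymm => ?_, ?_⟩
  · rcases (hmem R).mp ⟨hR, hdet, hsymm⟩ with h | ⟨k, h⟩
    · exact .inl h
    · exact .inr ⟨v k, by simpa using horth k k, ⟨lam k, heig k⟩, h⟩
  · ext R
    exact (hmem R).trans (by simp [Fin.exists_fin_succ])

theorem stmt12 (A : Matrix (Fin 3) (Fin 3) ℝ) (hsymm : A.IsSymm) (hpd : A.PosDef)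
    (lam : Fin 3 → ℝ) (v : Fin 3 → Fin 3 → ℝ)
    (hlam : lam 0 < lam 1 ∧ lam 1 < lam 2)
    (horth : ∀ i j, v i ⬝ᵥ v j = if i = j then 1 else 0)
    (heig : ∀ i, A *ᵥ v i = lam i • v i) :
    (∀ R : Matrix (Fin 3) (Fin 3) ℝ, Rᵀ * R = 1 → R.det = 1 → psi (A * R) = 0 →
      R = 1 ∨ ∃ w : Fin 3 → ℝ, w ⬝ᵥ w = 1 ∧ (∃ μ : ℝ, A *ᵥ w = μ • w) ∧ R = Ra Real.pi w) ∧
    {R : Matrix (Fin 3) (Fin 3) ℝ | Rᵀ * R = 1 ∧ R.det = 1 ∧ psi (A * R) = 0}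
      = {1, Ra Real.pi (v 0), Ra Real.pi (v 1), Ra Real.pi (v 2)} :=
  stmt12_general A hpd lam v hlam horth heig
end

section
/- Let A ∈ ℝ^{3×3} be symmetric positive definite with eigenvalues 0 < λ₁ ≤ λ₂ < λ₃ and corresponding orthonormal eigenvectors v₁, v₂, v₃. Suppose λ₁ < λ₁λ₃/(λ₃ − λ₁) ≤ λ₂, and define u := α₂ v₂ + α₃ v₃ with α₂² = λ₂/(λ₂+λ₃), α₃² = λ₃/(λ₂+λ₃). Then u is a unit vector and for every unit eigenvector v of A, Δ(u,v) := uᵀ(tr(A)I₃ − A − 2vᵀAv(I₃ − vvᵀ))u ≥ λ₁. -/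
open Matrix Real

/-!
Index the eigenvalues from 0, so λ₀ ≤ λ₁ < λ₂. If `A w = μ w` with `|w| = 1`, then
`Δ(u, w) = tr A - uᵀAu - 2μ(1 - ⟪u, w⟫²)`, and the choice of `α` gives
`tr A - uᵀAu = λ₀ + 2h` with `h = λ₁λ₂/(λ₁+λ₂)`, so it suffices that `μ(1 - ⟪u, w⟫²) ≤ h`.
In coordinates `cᵢ = ⟪vᵢ, w⟫` (with `∑ cᵢ² = 1` and `cᵢ = 0` unless `λᵢ = μ`): if `w = ±v₁` or
`w = ±v₂` the two sides are equal, again by the choice of `α`; otherwise `c₀ ≠ 0`, so `μ = λ₀`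
and `μ(1 - ⟪u, w⟫²) ≤ λ₀ ≤ h`, which is the gap condition.
-/

namespace Matrix

variable {n R : Type*} [Fintype n] [CommRing R]

lemma dotProduct_smul_add_smul_of_orthonormal {x y : n → R} (hx : x ⬝ᵥ x = 1)
    (hy : y ⬝ᵥ y = 1) (hxy : x ⬝ᵥ y = 0) (a b c d : R) :
    (a • x + b • y) ⬝ᵥ (c • x + d • y) = a * c + b * d := by
  simp only [dotProduct_add, add_dotProduct, dotProduct_smul, smul_dotProduct, smul_eq_mul,
    hx, hy, hxy, dotProduct_comm y x]
  ring

lemma IsSymm.mul_dotProduct_eq_of_mulVec_eq {A : Matrix n n R} (hA : A.IsSymm)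
    {v w : n → R} {a b : R} (hv : A *ᵥ v = a • v) (hw : A *ᵥ w = b • w) :
    a * (v ⬝ᵥ w) = b * (v ⬝ᵥ w) := by
  calc a * (v ⬝ᵥ w) = (A *ᵥ v) ⬝ᵥ w := by rw [hv, smul_dotProduct, smul_eq_mul]
    _ = v ⬝ᵥ (A *ᵥ w) := by rw [dotProduct_mulVec, ← vecMul_transpose, hA.eq]
    _ = b * (v ⬝ᵥ w) := by rw [hw, dotProduct_smul, smul_eq_mul]

variable [DecidableEq n]

lemma of_mul_transpose_eq_one_of_orthonormal {v : n → n → R}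
    (hv : ∀ i j, v i ⬝ᵥ v j = if i = j then 1 else 0) : of v * (of v)ᵀ = 1 := by
  ext i j
  simpa [mul_apply, dotProduct, one_apply] using hv i j

lemma sum_sq_dotProduct_of_mul_transpose_eq_one {V : Matrix n n R} (hV : V * Vᵀ = 1)
    (w : n → R) : ∑ i, (V i ⬝ᵥ w) ^ 2 = w ⬝ᵥ w := by
  calc ∑ i, (V i ⬝ᵥ w) ^ 2 = (V *ᵥ w) ⬝ᵥ (V *ᵥ w) := by simp only [sq]; rfl
    _ = w ⬝ᵥ w := by
      rw [dotProduct_mulVec, ← mulVec_transpose, mulVec_mulVec, mul_eq_one_comm.mp hV,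
        one_mulVec]

lemma trace_eq_sum_of_mul_transpose_eq_one {A V : Matrix n n R} {lam : n → R}
    (hV : V * Vᵀ = 1) (heig : ∀ i, A *ᵥ V i = lam i • V i) : A.trace = ∑ i, lam i := by
  have hdiag : A * Vᵀ = Vᵀ * diagonal lam := by
    ext k i
    rw [mul_diagonal]
    simpa [mul_apply, mulVec, dotProduct, mul_comm] using congrFun (heig i) k
  calc A.trace = (A * Vᵀ * V).trace := by rw [Matrix.mul_assoc, mul_eq_one_comm.mp hV, mul_one]
    _ = (V * Vᵀ * diagonal lam).trace := by rw [trace_mul_comm, hdiag, Matrix.mul_assoc]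
    _ = ∑ i, lam i := by rw [hV, one_mul, trace_diagonal]

lemma dotProduct_mulVec_smul_one_sub_sub_smul (A : Matrix n n R) (t c : R) (u w : n → R) :
    u ⬝ᵥ ((t • 1 - A - c • (1 - vecMulVec w w)) *ᵥ u)
      = t * (u ⬝ᵥ u) - u ⬝ᵥ (A *ᵥ u) - c * (u ⬝ᵥ u - (u ⬝ᵥ w) ^ 2) := by
  simp only [sub_mulVec, smul_mulVec, one_mulVec, vecMulVec_mulVec, dotProduct_sub,
    dotProduct_smul, smul_eq_mul, op_smul_eq_smul, dotProduct_comm w u]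
  ring

end Matrix

lemma Matrix.PosDef.pos_of_mulVec_eq_smul {n : Type*} [Fintype n] {A : Matrix n n ℝ}
    (hA : A.PosDef) {v : n → ℝ} (hv : v ≠ 0) {μ : ℝ} (h : A *ᵥ v = μ • v) : 0 < μ := by
  have hpos := hA.dotProduct_mulVec_pos hv
  rw [h, dotProduct_smul, smul_eq_mul] at hpos
  exact pos_of_mul_pos_left hpos (dotProduct_star_self_nonneg v)

lemma mul_add_le_mul_of_mul_div_sub_le {a b c : ℝ} (hac : a < c) (h : a * c / (c - a) ≤ b) :
    a * (b + c) ≤ b * c := by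
  have := (div_le_iff₀ (sub_pos.mpr hac)).mp h
  linarith

lemma sq_mul_add_sq_mul_eq {p q a b : ℝ} (hpq : p + q ≠ 0) (ha : a ^ 2 = p / (p + q))
    (hb : b ^ 2 = q / (p + q)) : a ^ 2 * p + b ^ 2 * q = p + q - 2 * (p * q / (p + q)) := by
  rw [ha, hb]
  field_simp
  ring

lemma mul_one_sub_mul_sq_eq {p q a c : ℝ} (hpq : p + q ≠ 0) (ha : a ^ 2 = p / (p + q))
    (hc : c ^ 2 = 1) : p * (1 - (a * c) ^ 2) = p * q / (p + q) := by
  rw [mul_pow, ha, hc]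
  field_simp
  ring

lemma mul_one_sub_sq_le_of_eigen_coords {L₀ L₁ L₂ μ a₁ a₂ c₀ c₁ c₂ : ℝ} (h₀ : 0 ≤ L₀)
    (h₀₁ : L₀ ≤ L₁) (h₁₂ : L₁ < L₂) (hgap : L₀ * (L₁ + L₂) ≤ L₁ * L₂)
    (ha₁ : a₁ ^ 2 = L₁ / (L₁ + L₂)) (ha₂ : a₂ ^ 2 = L₂ / (L₁ + L₂))
    (hc : c₀ ^ 2 + c₁ ^ 2 + c₂ ^ 2 = 1)
    (hc₀ : L₀ * c₀ = μ * c₀) (hc₁ : L₁ * c₁ = μ * c₁) (hc₂ : L₂ * c₂ = μ * c₂) :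
    μ * (1 - (a₁ * c₁ + a₂ * c₂) ^ 2) ≤ L₁ * L₂ / (L₁ + L₂) := by
  have hS : 0 < L₁ + L₂ := by linarith
  rcases eq_or_ne c₂ 0 with rfl | hc₂0
  · rcases eq_or_ne c₀ 0 with rfl | hc₀0
    · have hc₁sq : c₁ ^ 2 = 1 := by linarith
      obtain rfl : L₁ = μ := mul_right_cancel₀ (by rintro rfl; norm_num at hc₁sq) hc₁
      rw [mul_zero, add_zero, mul_one_sub_mul_sq_eq hS.ne' ha₁ hc₁sq]
    · obtain rfl : L₀ = μ := mul_right_cancel₀ hc₀0 hc₀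
      calc L₀ * (1 - (a₁ * c₁ + a₂ * 0) ^ 2) ≤ L₀ := by nlinarith [sq_nonneg (a₁ * c₁)]
        _ ≤ L₁ * L₂ / (L₁ + L₂) := by rwa [le_div_iff₀ hS]
  · obtain rfl : L₂ = μ := mul_right_cancel₀ hc₂0 hc₂
    have hc₀0 : c₀ = 0 := by
      by_contra h; linarith [mul_right_cancel₀ h hc₀]
    have hc₁0 : c₁ = 0 := by
      by_contra h; linarith [mul_right_cancel₀ h hc₁]
    subst hc₀0 hc₁0
    apply le_of_eq
    calc L₂ * (1 - (a₁ * 0 + a₂ * c₂) ^ 2) = L₂ * L₁ / (L₂ + L₁) := by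
          rw [mul_zero, zero_add]
          exact mul_one_sub_mul_sq_eq (by linarith) (by rw [ha₂, add_comm]) (by linarith)
      _ = L₁ * L₂ / (L₁ + L₂) := by ring

theorem stmt18 (A : Matrix (Fin 3) (Fin 3) ℝ)
    (hsymm : A.IsSymm) (hpd : A.PosDef)
    (lam : Fin 3 → ℝ) (v : Fin 3 → Fin 3 → ℝ)
    (hord : lam 0 ≤ lam 1 ∧ lam 1 < lam 2)
    (horth : ∀ i j, v i ⬝ᵥ v j = if i = j then 1 else 0)
    (heig : ∀ i, A *ᵥ v i = lam i • v i)
    (hgap : lam 0 < lam 0 * lam 2 / (lam 2 - lam 0) ∧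
            lam 0 * lam 2 / (lam 2 - lam 0) ≤ lam 1)
    (α₂ α₃ : ℝ) (hα₂ : α₂ ^ 2 = lam 1 / (lam 1 + lam 2))
    (hα₃ : α₃ ^ 2 = lam 2 / (lam 1 + lam 2))
    (u : Fin 3 → ℝ) (hu : u = α₂ • v 1 + α₃ • v 2) :
    u ⬝ᵥ u = 1 ∧
    ∀ w : Fin 3 → ℝ, w ⬝ᵥ w = 1 → (∃ μ : ℝ, A *ᵥ w = μ • w) →
      lam 0 ≤ u ⬝ᵥ ((A.trace • (1 : Matrix (Fin 3) (Fin 3) ℝ) - A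
        - (2 * (w ⬝ᵥ (A *ᵥ w))) • (1 - vecMulVec w w)) *ᵥ u) := by
  obtain ⟨h₀₁, h₁₂⟩ := hord
  have hV := of_mul_transpose_eq_one_of_orthonormal horth
  have hlam₀ : 0 < lam 0 :=
    hpd.pos_of_mulVec_eq_smul (fun h ↦ by simpa [h] using horth 0 0) (heig 0)
  have hS : lam 1 + lam 2 ≠ 0 := by linarith
  have hpair : ∀ a b c d : ℝ, (a • v 1 + b • v 2) ⬝ᵥ (c • v 1 + d • v 2) = a * c + b * d :=
    dotProduct_smul_add_smul_of_orthonormal (by simp [horth]) (by simp [horth]) (by simp [horth])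
  have huu : u ⬝ᵥ u = 1 := by
    rw [hu, hpair, ← sq, ← sq, hα₂, hα₃]
    field_simp
  refine ⟨huu, fun w hw ⟨μ, hμ⟩ ↦ ?_⟩
  have huAu : u ⬝ᵥ (A *ᵥ u) = α₂ ^ 2 * lam 1 + α₃ ^ 2 * lam 2 := by
    rw [hu, mulVec_add, mulVec_smul, mulVec_smul, heig, heig, smul_smul, smul_smul, hpair]
    ring
  have hwAw : w ⬝ᵥ (A *ᵥ w) = μ := by rw [hμ, dotProduct_smul, hw, smul_eq_mul, mul_one]
  have hcoord : ∀ i, lam i * (v i ⬝ᵥ w) = μ * (v i ⬝ᵥ w) := fun i ↦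
    hsymm.mul_dotProduct_eq_of_mulVec_eq (heig i) hμ
  have hparseval : (v 0 ⬝ᵥ w) ^ 2 + (v 1 ⬝ᵥ w) ^ 2 + (v 2 ⬝ᵥ w) ^ 2 = 1 := by
    rw [← hw, ← sum_sq_dotProduct_of_mul_transpose_eq_one hV w, Fin.sum_univ_three]
    rfl
  have hbound := mul_one_sub_sq_le_of_eigen_coords hlam₀.le h₀₁ h₁₂
    (mul_add_le_mul_of_mul_div_sub_le (h₀₁.trans_lt h₁₂) hgap.2) hα₂ hα₃ hparseval
    (hcoord 0) (hcoord 1) (hcoord 2)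
  rw [dotProduct_mulVec_smul_one_sub_sub_smul, trace_eq_sum_of_mul_transpose_eq_one hV heig,
    Fin.sum_univ_three, huu, huAu, sq_mul_add_sq_mul_eq hS hα₂ hα₃, hwAw, hu, add_dotProduct,
    smul_dotProduct, smul_dotProduct, smul_eq_mul, smul_eq_mul]
  linarith
end
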